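/- arXiv:2605.09010 — 9 statements merged into one kernel-verified Lean document; each statement's English description precedes it below -/
import Mathlib

section
/- Let u, v be ultrafilters on ℕ with v strongly dividing u. Then u ∈ MAX if and only if u/v ∈ MAX, where MAX is the set of ultrafilters containing nℕ for every n. -/
/-- x·A = {x*a : a ∈ A} in ℕ+. -/
def pmul (x : ℕ+) (A : Set ℕ+) : Set ℕ+ := (x * ·) '' A

/-- xℕ, the set of positive multiples of x. -/
def mulsOf (x : ℕ+) : Set ℕ+ := {n | x ∣ n}

/-- D(u) = {x : xℕ ∈ u}. -/
def Dset (u : Ultrafilter ℕ+) : Set ℕ+ := {x | mulsOf x ∈ u}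

/-- v strongly divides u: D(u) ∈ v. -/
def SDvd (v u : Ultrafilter ℕ+) : Prop := Dset u ∈ v

/-- Membership in the quotient u/v:  A ∈ u/v iff {x : x·A ∈ u} ∈ v. -/
def quotMem (u v : Ultrafilter ℕ+) (A : Set ℕ+) : Prop := {x | pmul x A ∈ u} ∈ v

attribute [local instance] Ultrafilter.mul

/-! Since `x·nℕ = (xn)ℕ ⊆ nℕ`: if `u` contains every `mℕ` then `{x : x·nℕ ∈ u}` is all of `ℕ`,
and conversely a single `x` with `x·nℕ ∈ u` already puts `nℕ` in `u`. -/

lemma pmul_mulsOf (x n : ℕ+) : pmul x (mulsOf n) = mulsOf (x * n) := by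
  ext m
  constructor
  · rintro ⟨a, ha, rfl⟩
    exact mul_dvd_mul_left x ha
  · rintro ⟨k, rfl⟩
    exact ⟨n * k, dvd_mul_right n k, (mul_assoc x n k).symm⟩

lemma mulsOf_mul_subset (x n : ℕ+) : mulsOf (x * n) ⊆ mulsOf n :=
  fun _ hm => (dvd_mul_left n x).trans hm

section Quotient

variable {u v : Ultrafilter ℕ+} {A : Set ℕ+}

lemma quotMem_of_forall_pmul_mem (hA : ∀ x, pmul x A ∈ u) : quotMem u v A :=
  Filter.univ_mem' hA

lemma exists_pmul_mem_of_quotMem (hA : quotMem u v A) : ∃ x, pmul x A ∈ u :=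
  Ultrafilter.nonempty_of_mem hA

lemma mulsOf_mem_of_quotMem {n : ℕ+} (hn : quotMem u v (mulsOf n)) : mulsOf n ∈ u := by
  obtain ⟨x, hx⟩ := exists_pmul_mem_of_quotMem hn
  rw [pmul_mulsOf] at hx
  exact Filter.mem_of_superset hx (mulsOf_mul_subset x n)

end Quotient

theorem stmt0_general (u v : Ultrafilter ℕ+) :
    (∀ n : ℕ+, mulsOf n ∈ u) ↔ (∀ n : ℕ+, quotMem u v (mulsOf n)) :=
  ⟨fun hu n => quotMem_of_forall_pmul_mem fun x => pmul_mulsOf x n ▸ hu (x * n),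
    fun hq n => mulsOf_mem_of_quotMem (hq n)⟩

theorem stmt0 (u v : Ultrafilter ℕ+) (h : SDvd v u) :
    (∀ n : ℕ+, mulsOf n ∈ u) ↔ (∀ n : ℕ+, quotMem u v (mulsOf n)) :=
  stmt0_general u v
end

section
/- Let u, v, w be ultrafilters on ℕ. If v strongly divides u and w = u·t for some ultrafilter t (u right-divides w in the semigroup (βℕ,·)), then v strongly divides w. -/
attribute [local instance] Ultrafilter.mul

theorem Ultrafilter.mem_mul_of_mem_left {M : Type*} [Mul M] {S : Set M}
    (hS : ∀ a ∈ S, ∀ b, a * b ∈ S) {u : Ultrafilter M} (t : Ultrafilter M) (hu : S ∈ u) :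
    S ∈ u * t := by
  change ∀ᶠ m in (u * t : Ultrafilter M), m ∈ S
  rw [Ultrafilter.eventually_mul]
  exact Filter.Eventually.mono hu fun a ha => .of_forall (hS a ha)

theorem Dset_subset_Dset_mul (u t : Ultrafilter ℕ+) : Dset u ⊆ Dset (u * t) :=
  fun _ hx => Ultrafilter.mem_mul_of_mem_left (fun _ ha b => Dvd.dvd.mul_right ha b) t hx

theorem stmt1 (u v w t : Ultrafilter ℕ+) (h : SDvd v u) (hw : w = u * t) :
    SDvd v w := by
  subst hw
  exact v.toFilter.mem_of_superset h (Dset_subset_Dset_mul u t)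
end

section
/- Let u be a self-divisible ultrafilter on ℕ (i.e., D(u) ∈ u). Then D(u·(u/u)) ⊆ D(u·u). -/
attribute [local instance] Ultrafilter.mul

/-!
The set `{b | x ∣ a * b}` is closed under taking multiples, so it lies in `u/u` only if it
lies in `u`: some `y·{b | x ∣ a * b} ⊆ {b | x ∣ a * b}` belongs to `u`. Since `x ∈ D(u·v)`
says exactly that `{b | x ∣ a * b} ∈ v` for `u`-almost all `a`, replacing `v = u/u` by `u`
can only enlarge `D(u·v)`.
-/

lemma pmul_subset_of_forall_mul_mem {A : Set ℕ+} (hA : ∀ a ∈ A, ∀ y, y * a ∈ A) (y : ℕ+) :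
    pmul y A ⊆ A := by
  rintro _ ⟨a, ha, rfl⟩
  exact hA a ha y

lemma mem_of_quotMem_of_forall_mul_mem {u v : Ultrafilter ℕ+} {A : Set ℕ+}
    (hA : ∀ a ∈ A, ∀ y, y * a ∈ A) (h : quotMem u v A) : A ∈ u := by
  obtain ⟨y, hy⟩ := Ultrafilter.nonempty_of_mem h
  exact u.toFilter.mem_of_superset hy (pmul_subset_of_forall_mul_mem hA y)

lemma mem_Dset_mul_iff {x : ℕ+} {u v : Ultrafilter ℕ+} :
    x ∈ Dset (u * v) ↔ ∀ᶠ a in (u : Filter ℕ+), {b | x ∣ a * b} ∈ v :=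
  Ultrafilter.eventually_mul u v (x ∣ ·)

lemma Dset_mul_subset_Dset_mul {u v w : Ultrafilter ℕ+}
    (hvw : ∀ A, (∀ a ∈ A, ∀ y, y * a ∈ A) → A ∈ v → A ∈ w) :
    Dset (u * v) ⊆ Dset (u * w) := by
  intro x hx
  rw [mem_Dset_mul_iff] at hx ⊢
  filter_upwards [hx] with a ha
  refine hvw _ (fun b hb y => ?_) ha
  exact (hb.mul_left y).trans (mul_left_comm y a b).dvd

theorem stmt3_general (u : Ultrafilter ℕ+)
    (q : Ultrafilter ℕ+) (hq : ∀ A : Set ℕ+, A ∈ q ↔ quotMem u u A) :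
    Dset (u * q) ⊆ Dset (u * u) :=
  Dset_mul_subset_Dset_mul fun _ hA hAq => mem_of_quotMem_of_forall_mul_mem hA ((hq _).mp hAq)

theorem stmt3 (u : Ultrafilter ℕ+) (hu : Dset u ∈ u)
    (q : Ultrafilter ℕ+) (hq : ∀ A : Set ℕ+, A ∈ q ↔ quotMem u u A) :
    Dset (u * q) ⊆ Dset (u * u) :=
  stmt3_general u q hq
end

section
/- There exists a nonprincipal ultrafilter u on ℕ that is a multiplicative idempotent (u·u = u), is self-divisible (D(u) ∈ u), and is not in MAX (there exists n with nℕ ∉ u). In fact any idempotent ultrafilter containing {2^n : n ∈ ℕ} works. -/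
attribute [local instance] Ultrafilter.mul

/-!
By Hindman's theorem (Ellis–Numakura applied to the finite products of the constant sequence 2)
there is an idempotent ultrafilter `u` containing `M = {2^n : n ≥ 1}`. Since `1 ∉ M` and `ℕ+` is
cancellative, `u` is not principal, so it contains all but finitely many elements of `M`. These
are all divisible by `2^k`, whence `2^k ℕ ∈ u` for every `k` and `M ⊆ D(u)`; on the other hand
`3ℕ` is disjoint from `M`, so `3ℕ ∉ u`.
-/

open Filter

def powersPos {M : Type*} [Monoid M] (a : M) : Set M := {x | ∃ n : ℕ+, x = a ^ (n : ℕ)}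

lemma Hindman.FP_const_subset_powersPos {M : Type*} [Monoid M] (a : M) :
    Hindman.FP (Stream'.const a) ⊆ powersPos a := by
  suffices ∀ s : Stream' M, ∀ x ∈ Hindman.FP s, s = Stream'.const a → x ∈ powersPos a from
    fun x hx ↦ this _ x hx rfl
  intro s x hx
  induction hx with
  | head' s => rintro rfl; exact ⟨1, (pow_one a).symm⟩
  | tail' s x _ ih => rintro rfl; exact ih rfl
  | cons' s x _ ih =>
    rintro rfl
    obtain ⟨n, rfl⟩ := ih rfl
    exact ⟨n + 1, by rw [PNat.add_coe, PNat.one_coe, pow_succ']; rfl⟩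

lemma powersPos_diff_dvd_finite {M : Type*} [CommMonoid M] (a : M) (k : ℕ) :
    (powersPos a \ {x | a ^ k ∣ x}).Finite := by
  refine ((Set.finite_Iio k).image (a ^ ·)).subset ?_
  rintro _ ⟨⟨n, rfl⟩, hdvd⟩
  refine ⟨n, ?_, rfl⟩
  by_contra hkn
  exact hdvd (pow_dvd_pow a (not_lt.mp hkn))

lemma one_notMem_powersPos {a : ℕ+} (ha : a ≠ 1) : 1 ∉ powersPos a := by
  rintro ⟨n, hn⟩
  exact ha ((pow_eq_one_iff.mp hn.symm).resolve_right n.ne_zero)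

lemma disjoint_powersPos_mulsOf {a b : ℕ+} (hab : Nat.Coprime b a) (hb : b ≠ 1) :
    Disjoint (powersPos a) (mulsOf b) := by
  rintro s hsa hsb x hx
  obtain ⟨n, rfl⟩ := hsa hx
  have hdvd : (b : ℕ) ∣ (a : ℕ) ^ (n : ℕ) := by exact_mod_cast PNat.dvd_iff.mp (hsb hx)
  exact hb (PNat.coe_eq_one_iff.mp ((hab.pow_right n).eq_one_of_dvd hdvd))

namespace Ultrafilter

variable {α M : Type*}

lemma eq_one_of_pure_mul_pure_eq [Monoid M] [IsLeftCancelMul M] {a : M}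
    (h : (pure a : Ultrafilter M) * pure a = pure a) : a = 1 :=
  mul_eq_left.mp (pure_injective h)

lemma not_exists_eq_pure_of_mul_self [Monoid M] [IsLeftCancelMul M] {u : Ultrafilter M}
    (hu : u * u = u) {s : Set M} (hs : s ∈ u) (h1 : 1 ∉ s) : ¬ ∃ a, u = pure a := by
  rintro ⟨a, rfl⟩
  rw [eq_one_of_pure_mul_pure_eq hu] at hs
  exact h1 hs

lemma diff_mem_of_not_exists_eq_pure {u : Ultrafilter α} (hu : ¬ ∃ a, u = pure a)
    {s t : Set α} (hs : s ∈ u) (ht : t.Finite) : s \ t ∈ u := by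
  obtain hcof | hpure := u.le_cofinite_or_eq_pure
  · exact inter_mem hs (hcof ht.compl_mem_cofinite)
  · exact absurd hpure hu

lemma notMem_of_disjoint {u : Ultrafilter α} {s t : Set α} (hs : s ∈ u) (hst : Disjoint s t) :
    t ∉ u :=
  compl_mem_iff_notMem.mp (mem_of_superset hs hst.subset_compl_right)

end Ultrafilter

lemma Dset_mem_of_powersPos_mem {u : Ultrafilter ℕ+} (hu : ¬ ∃ a, u = pure a) {a : ℕ+}
    (ha : powersPos a ∈ u) : Dset u ∈ u := by
  refine mem_of_superset ha ?_
  rintro _ ⟨k, rfl⟩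
  refine mem_of_superset (u.diff_mem_of_not_exists_eq_pure hu ha
    (powersPos_diff_dvd_finite a k)) ?_
  rintro x ⟨hxa, hx⟩
  by_contra hdvd
  exact hx ⟨hxa, hdvd⟩

theorem stmt6 :
    (∃ u : Ultrafilter ℕ+, (¬ ∃ n : ℕ+, u = pure n) ∧ u * u = u ∧ Dset u ∈ u ∧
      ∃ n : ℕ+, mulsOf n ∉ u) ∧
    (∀ u : Ultrafilter ℕ+, u * u = u → {x : ℕ+ | ∃ n : ℕ+, x = 2 ^ (n : ℕ)} ∈ u →
      (¬ ∃ n : ℕ+, u = pure n) ∧ Dset u ∈ u ∧ ∃ n : ℕ+, mulsOf n ∉ u) := by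
  have of_idempotent (u : Ultrafilter ℕ+) (hu : u * u = u) (h2 : powersPos 2 ∈ u) :
      (¬ ∃ n : ℕ+, u = pure n) ∧ Dset u ∈ u ∧ ∃ n : ℕ+, mulsOf n ∉ u := by
    have hnp := u.not_exists_eq_pure_of_mul_self hu h2 (one_notMem_powersPos (by decide))
    exact ⟨hnp, Dset_mem_of_powersPos_mem hnp h2, 3,
      u.notMem_of_disjoint h2 (disjoint_powersPos_mulsOf (by decide) (by decide))⟩
  refine ⟨?_, of_idempotent⟩
  obtain ⟨u, hu, hFP⟩ := Hindman.exists_idempotent_ultrafilter_le_FP (Stream'.const (2 : ℕ+))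
  have h2 : powersPos 2 ∈ u := mem_of_superset hFP (Hindman.FP_const_subset_powersPos 2)
  obtain ⟨hnp, hD, h3⟩ := of_idempotent u hu h2
  exact ⟨u, hnp, hu, hD, h3⟩
end

section
/- A set A ⊆ ℕ is a multiplicative Δ-set (i.e., there is a sequence (x_n) in ℕ with x_n dividing x_m for n < m and {x_m / x_n : m > n} ⊆ A) if and only if A ∈ u/u for some self-divisible ultrafilter u on ℕ. -/
attribute [local instance] Ultrafilter.mul

/-- A is a multiplicative Δ-set: there is a sequence with x n dividing x m for n < m
and all quotients (x m) / (x n), for n < m, lying in A. -/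
def IsDeltaSet (A : Set ℕ+) : Prop :=
  ∃ x : ℕ → ℕ+, ∀ n m : ℕ, n < m → ∃ c ∈ A, x m = x n * c

open Filter

theorem Filter.exists_seq_rel_of_setOf_setOf_mem {α : Type*} {R : α → α → Prop} {u : Filter α}
    [u.NeBot] (hu : {a | {b | R a b} ∈ u} ∈ u) :
    ∃ x : ℕ → α, ∀ n m, n < m → R (x n) (x m) := by
  obtain ⟨x, -, hx⟩ := exists_seq_of_forall_finset_exists (· ∈ {a | {b | R a b} ∈ u}) R
    fun s hs => by
      have : {a | {b | R a b} ∈ u} ∩ (⋂ a ∈ s, {b | R a b}) ∈ u :=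
        inter_mem hu ((biInter_finset_mem s).2 hs)
      exact (nonempty_of_mem this).imp fun _ hy => ⟨hy.1, Set.mem_iInter₂.1 hy.2⟩
  exact ⟨x, hx⟩

namespace Ultrafilter

theorem setOf_setOf_mem_map_hyperfilter {α : Type*} {R : α → α → Prop} {x : ℕ → α}
    (hx : ∀ n m, n < m → R (x n) (x m)) :
    {a | {b | R a b} ∈ (hyperfilter ℕ).map x} ∈ (hyperfilter ℕ).map x := by
  refine mem_map.2 (univ_mem' fun n => ?_)
  exact Nat.hyperfilter_le_atTop (mem_of_superset (Ioi_mem_atTop n) fun m => hx n m)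

theorem exists_setOf_setOf_mem_iff_exists_seq {α : Type*} (R : α → α → Prop) :
    (∃ u : Ultrafilter α, {a | {b | R a b} ∈ u} ∈ u) ↔
      ∃ x : ℕ → α, ∀ n m, n < m → R (x n) (x m) :=
  ⟨fun ⟨_, hu⟩ => exists_seq_rel_of_setOf_setOf_mem hu,
    fun ⟨_, hx⟩ => ⟨_, setOf_setOf_mem_map_hyperfilter hx⟩⟩

end Ultrafilter

theorem pmul_subset_mulsOf (x : ℕ+) (A : Set ℕ+) : pmul x A ⊆ mulsOf x := by
  rintro _ ⟨c, -, rfl⟩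
  exact dvd_mul_right x c

theorem Dset_mem_of_quotMem {u v : Ultrafilter ℕ+} {A : Set ℕ+} (h : quotMem u v A) :
    Dset u ∈ v :=
  mem_of_superset h fun x hx => mem_of_superset hx (pmul_subset_mulsOf x A)

theorem isDeltaSet_iff (A : Set ℕ+) :
    IsDeltaSet A ↔ ∃ x : ℕ → ℕ+, ∀ n m, n < m → x m ∈ pmul (x n) A := by
  simp only [IsDeltaSet, pmul, Set.mem_image, eq_comm]

theorem stmt7 (A : Set ℕ+) :
    IsDeltaSet A ↔ ∃ u : Ultrafilter ℕ+, Dset u ∈ u ∧ quotMem u u A := by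
  rw [isDeltaSet_iff, ← Ultrafilter.exists_setOf_setOf_mem_iff_exists_seq fun a b => b ∈ pmul a A]
  exact exists_congr fun u => (and_iff_right_of_imp Dset_mem_of_quotMem).symm
end

section
/- A set A ⊆ ℕ is a multiplicative Δ*-set (meets every multiplicative Δ-set) if and only if A ∈ u/u for every self-divisible ultrafilter u on ℕ. -/
attribute [local instance] Ultrafilter.mul

open Filter Set

theorem Filter.exists_seq_forall_lt_mem {α : Type*} {f : Filter α} [f.NeBot] {R : α → Set α}
    (h : ∀ᶠ y in f, R y ∈ f) : ∃ x : ℕ → α, ∀ n m, n < m → x m ∈ R (x n) := by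
  have pick (S : {S : Set α // S ∈ f}) : ∃ y, y ∈ S.1 ∧ R y ∈ f :=
    (Eventually.and S.2 h).exists
  choose y hyS hyR using pick
  let S : ℕ → {S : Set α // S ∈ f} := fun n =>
    Nat.rec ⟨univ, univ_mem⟩ (fun _ S => ⟨S.1 ∩ R (y S), inter_mem S.2 (hyR S)⟩) n
  have hS : Antitone fun n => (S n).1 := antitone_nat_of_succ_le fun _ => inter_subset_left
  exact ⟨fun n => y (S n), fun n m hnm => (hS hnm (hyS (S m))).2⟩

theorem IsDeltaSet.of_quotMem {u : Ultrafilter ℕ+} {B : Set ℕ+} (h : quotMem u u B) :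
    IsDeltaSet B := by
  obtain ⟨x, hx⟩ := Filter.exists_seq_forall_lt_mem (f := (u : Filter ℕ+)) h
  refine ⟨x, fun n m hnm => ?_⟩
  obtain ⟨c, hc, hxc⟩ := hx n m hnm
  exact ⟨c, hc, hxc.symm⟩

theorem mulsOf_eq_pmul_union_pmul_compl (x : ℕ+) (A : Set ℕ+) :
    mulsOf x = pmul x A ∪ pmul x Aᶜ := by
  rw [pmul, pmul, ← image_union, union_compl_self, image_univ]
  ext n
  exact ⟨fun ⟨c, hc⟩ => ⟨c, hc.symm⟩, fun ⟨c, hc⟩ => ⟨c, hc.symm⟩⟩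

theorem quotMem_compl_of_not_quotMem {u v : Ultrafilter ℕ+} {A : Set ℕ+} (huv : SDvd v u)
    (h : ¬ quotMem u v A) : quotMem u v Aᶜ := by
  have hcompl : {x | pmul x A ∈ u}ᶜ ∈ v := Ultrafilter.compl_mem_iff_notMem.2 h
  filter_upwards [huv, hcompl] with x hxD hxA
  rw [Dset, mem_ofPred_eq, mulsOf_eq_pmul_union_pmul_compl x A, Ultrafilter.union_mem_iff] at hxD
  exact hxD.resolve_left hxA

section ChainLimit

variable {w : Ultrafilter ℕ} {x : ℕ → ℕ+}

theorem Dset_map_mem (hw : (w : Filter ℕ) ≤ atTop) (hx : ∀ n m, n < m → x n ∣ x m) :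
    Dset (w.map x) ∈ w.map x :=
  Ultrafilter.mem_map.2 <| Eventually.of_forall fun n =>
    have hn : ∀ᶠ m in (w : Filter ℕ), n < m := hw (eventually_gt_atTop n)
    Ultrafilter.mem_map.2 (hn.mono (hx n))

theorem exists_lt_mem_pmul_of_quotMem (hw : (w : Filter ℕ) ≤ atTop) {A : Set ℕ+}
    (h : quotMem (w.map x) (w.map x) A) : ∃ n m, n < m ∧ x m ∈ pmul (x n) A := by
  have h' : ∀ᶠ n in (w : Filter ℕ), ∀ᶠ m in (w : Filter ℕ), x m ∈ pmul (x n) A := h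
  obtain ⟨n, hn⟩ := h'.exists
  obtain ⟨m, hm, hnm⟩ := (hn.and (hw (eventually_gt_atTop n))).exists
  exact ⟨n, m, hnm, hm⟩

end ChainLimit

theorem stmt8 (A : Set ℕ+) :
    (∀ B : Set ℕ+, IsDeltaSet B → (A ∩ B).Nonempty) ↔
      (∀ u : Ultrafilter ℕ+, Dset u ∈ u → quotMem u u A) := by
  constructor
  · intro hA u hu
    by_contra hq
    obtain ⟨a, haA, haAc⟩ := hA Aᶜ (IsDeltaSet.of_quotMem (quotMem_compl_of_not_quotMem hu hq))
    exact haAc haA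
  · rintro h B ⟨x, hx⟩
    have hdvd : ∀ n m, n < m → x n ∣ x m := fun n m hnm =>
      let ⟨c, _, hc⟩ := hx n m hnm; ⟨c, hc⟩
    have hu := h _ (Dset_map_mem Nat.hyperfilter_le_atTop hdvd)
    obtain ⟨n, m, hnm, a, haA, hxa⟩ := exists_lt_mem_pmul_of_quotMem Nat.hyperfilter_le_atTop hu
    obtain ⟨c, hcB, hxc⟩ := hx n m hnm
    exact ⟨a, haA, mul_left_cancel (hxa.trans hxc) ▸ hcB⟩
end

section
/- Let u be a self-divisible ultrafilter on ℕ and v any ultrafilter strongly dividing u. Then D(u) ∈ u/u; in particular u/v strongly divides u (forward direction: if u is self-divisible then u/v ∣ u). -/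
attribute [local instance] Ultrafilter.mul

/-! Since `D(u)` is closed under divisors, `xℕ ∩ D(u) ⊆ x·D(u)`. So when `D(u) ∈ u`, every
`x ∈ D(u)` has `x·D(u) ∈ u`, and any ultrafilter containing `D(u)` (`u` itself, or `v`) contains
`{x : x·D(u) ∈ u}`. -/

theorem mulsOf_subset_mulsOf_of_dvd {x y : ℕ+} (h : x ∣ y) : mulsOf y ⊆ mulsOf x :=
  fun _ hn => dvd_trans h hn

theorem mem_Dset_of_dvd {u : Ultrafilter ℕ+} {x y : ℕ+} (h : x ∣ y) (hy : y ∈ Dset u) :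
    x ∈ Dset u :=
  u.mem_of_superset hy (mulsOf_subset_mulsOf_of_dvd h)

theorem mulsOf_inter_Dset_subset_pmul (u : Ultrafilter ℕ+) (x : ℕ+) :
    mulsOf x ∩ Dset u ⊆ pmul x (Dset u) := by
  rintro _ ⟨⟨k, rfl⟩, hxk⟩
  exact ⟨k, mem_Dset_of_dvd (dvd_mul_left k x) hxk, rfl⟩

theorem Dset_subset_setOf_pmul_mem {u : Ultrafilter ℕ+} (hu : Dset u ∈ u) :
    Dset u ⊆ {x | pmul x (Dset u) ∈ u} :=
  fun x hx => u.mem_of_superset (Filter.inter_mem hx hu) (mulsOf_inter_Dset_subset_pmul u x)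

theorem quotMem_Dset_of_sDvd {u v : Ultrafilter ℕ+} (hu : Dset u ∈ u) (hv : SDvd v u) :
    quotMem u v (Dset u) :=
  v.mem_of_superset hv (Dset_subset_setOf_pmul_mem hu)

theorem stmt13 (u v : Ultrafilter ℕ+) (hu : Dset u ∈ u) (hv : SDvd v u) :
    quotMem u u (Dset u) ∧ quotMem u v (Dset u) :=
  ⟨quotMem_Dset_of_sDvd hu hu, quotMem_Dset_of_sDvd hu hv⟩
end

section
/- Let u, v be ultrafilters on ℕ with v strongly dividing u. If u/v strongly divides u, then u is self-divisible (D(u) ∈ u). -/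
attribute [local instance] Ultrafilter.mul

lemma mulsOf_anti {a b : ℕ+} (h : a ∣ b) : mulsOf b ⊆ mulsOf a :=
  fun _ hn => h.trans hn

lemma setOf_dvd_finite (n : ℕ+) : {q : ℕ+ | q ∣ n}.Finite :=
  (Set.finite_Iic n).subset fun _ => PNat.le_of_dvd

lemma mulsOf_mem_of_forall_prime_pow {f : Filter ℕ+} {n : ℕ+}
    (h : ∀ (p : ℕ+) (k : ℕ), (p : ℕ).Prime → p ^ k ∣ n → mulsOf (p ^ k) ∈ f) :
    mulsOf n ∈ f := by
  let P := {p : ℕ+ | p ∣ n ∧ (p : ℕ).Prime}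
  have hP : (⋂ p ∈ P, mulsOf (p ^ (n : ℕ).factorization p)) ∈ f := by
    refine (Filter.biInter_mem ((setOf_dvd_finite n).subset fun _ => And.left)).2 ?_
    rintro p ⟨-, hp⟩
    exact h p _ hp (PNat.dvd_iff.2 (by simpa using Nat.ordProj_dvd (n : ℕ) p))
  refine Filter.mem_of_superset hP fun m hm => ?_
  rw [Set.mem_iInter₂] at hm
  show n ∣ m
  rw [PNat.dvd_iff, ← Nat.factorization_prime_le_iff_dvd n.ne_zero m.ne_zero]
  intro p hp
  by_cases hpn : p ∣ n
  · have hpm := PNat.dvd_iff.1 (hm ⟨p, hp.pos⟩ ⟨PNat.dvd_iff.2 hpn, hp⟩)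
    exact (hp.pow_dvd_iff_le_factorization m.ne_zero).1 hpm
  · simp [Nat.factorization_eq_zero_of_not_dvd hpn]

/-- In the notation `φ_u(q) = sup {k : q^k ℕ ∈ u}`, this is `ℕ ∖ q^(φ_u(q)+1) ℕ`. -/
def powDivisorsIn (u : Ultrafilter ℕ+) (q : ℕ+) : Set ℕ+ :=
  {y | ∀ k : ℕ, q ^ k ∣ y → mulsOf (q ^ k) ∈ u}

lemma powDivisorsIn_mem (u : Ultrafilter ℕ+) (q : ℕ+) : powDivisorsIn u q ∈ u := by
  classical
  by_cases hex : ∃ k : ℕ, mulsOf (q ^ k) ∉ u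
  · refine Filter.mem_of_superset (Ultrafilter.compl_mem_iff_notMem.2 (Nat.find_spec hex))
      fun y hy k hk => ?_
    by_contra hk'
    exact hy ((pow_dvd_pow q (Nat.find_min' hex hk')).trans hk)
  · exact Filter.mem_of_superset Filter.univ_mem fun _ _ k _ => not_not.1 (not_exists.1 hex k)

lemma PNat.pow_dvd_of_pow_dvd_mul_of_not_dvd {p x d : ℕ+} {k : ℕ} (hp : (p : ℕ).Prime)
    (hpx : ¬p ∣ x) (h : p ^ k ∣ x * d) : p ^ k ∣ d := by
  rw [PNat.dvd_iff, PNat.pow_coe] at h ⊢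
  rw [PNat.dvd_iff] at hpx
  exact (((hp.coprime_iff_not_dvd).2 hpx).pow_left k).dvd_of_dvd_mul_left (by simpa using h)

theorem stmt14_general (u v : Ultrafilter ℕ+)
    (h : quotMem u v (Dset u)) : Dset u ∈ u := by
  obtain ⟨x, hx⟩ := Ultrafilter.nonempty_of_mem h
  have hpow : (⋂ p ∈ {p : ℕ+ | p ∣ x}, powDivisorsIn u p) ∈ u :=
    (Filter.biInter_mem (setOf_dvd_finite x)).2 fun p _ => powDivisorsIn_mem u p
  filter_upwards [show pmul x (Dset u) ∈ u from hx, hpow] with y ⟨d, hd, hy⟩ hyp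
  subst hy
  refine mulsOf_mem_of_forall_prime_pow fun p k hp hpk => ?_
  by_cases hpx : p ∣ x
  · exact Set.mem_iInter₂.1 hyp p hpx k hpk
  · exact Filter.mem_of_superset hd
      (mulsOf_anti (PNat.pow_dvd_of_pow_dvd_mul_of_not_dvd hp hpx hpk))

theorem stmt14 (u v : Ultrafilter ℕ+) (hv : SDvd v u)
    (h : quotMem u v (Dset u)) : Dset u ∈ u :=
  stmt14_general u v h
end

section
/- Let v be a prime ultrafilter on ℕ (the set of primes belongs to v) and u₁, u₂ ultrafilters on ℕ. If v strongly divides u₁·u₂ then v strongly divides u₁ or v strongly divides u₂. In fact P ∩ D(u₁·u₂) ⊆ D(u₁) ∪ D(u₂). -/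
attribute [local instance] Ultrafilter.mul

/-! For a prime `p`, the set `pℕ` is prime: `x * y ∈ pℕ` forces `x ∈ pℕ` or `y ∈ pℕ`. For any such
set `S` with `S ∈ U * V` and `S ∉ U`, some `x ∉ S` has `{y | x * y ∈ S} ∈ V`, and this set lies
inside `S`. -/
theorem Ultrafilter.mem_or_mem_of_mul_mem {M : Type*} [Mul M] {U V : Ultrafilter M} {S : Set M}
    (hS : ∀ x y, x * y ∈ S → x ∈ S ∨ y ∈ S) (h : S ∈ U * V) : S ∈ U ∨ S ∈ V := by
  refine or_iff_not_imp_left.2 fun hU => ?_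
  have hUV : ∀ᶠ x in U, ∀ᶠ y in V, x * y ∈ S := (U.eventually_mul V (· ∈ S)).1 h
  obtain ⟨x, hxS, hx⟩ := U.nonempty_of_mem (U.inter_mem (U.compl_mem_iff_notMem.2 hU) hUV)
  exact V.mem_of_superset hx fun y hy => (hS x y hy).resolve_left hxS

theorem mem_mulsOf_or_of_mul {p : ℕ+} (hp : (p : ℕ).Prime) (x y : ℕ+)
    (h : x * y ∈ mulsOf p) : x ∈ mulsOf p ∨ y ∈ mulsOf p := by
  have hpxy : (p : ℕ) ∣ x * y := by simpa only [PNat.mul_coe] using PNat.dvd_iff.1 h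
  exact (hp.dvd_mul.1 hpxy).imp PNat.dvd_iff.2 PNat.dvd_iff.2

theorem primes_inter_Dset_mul_subset (u₁ u₂ : Ultrafilter ℕ+) :
    {p : ℕ+ | (p : ℕ).Prime} ∩ Dset (u₁ * u₂) ⊆ Dset u₁ ∪ Dset u₂ :=
  fun _ ⟨hp, hd⟩ => Ultrafilter.mem_or_mem_of_mul_mem (mem_mulsOf_or_of_mul hp) hd

theorem stmt15 (v u₁ u₂ : Ultrafilter ℕ+) (hv : {p : ℕ+ | (p : ℕ).Prime} ∈ v) :
    (SDvd v (u₁ * u₂) → SDvd v u₁ ∨ SDvd v u₂) ∧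
      {p : ℕ+ | (p : ℕ).Prime} ∩ Dset (u₁ * u₂) ⊆ Dset u₁ ∪ Dset u₂ := by
  refine ⟨fun h => ?_, primes_inter_Dset_mul_subset u₁ u₂⟩
  exact Ultrafilter.union_mem_iff.1 <|
    v.mem_of_superset (v.inter_mem hv h) (primes_inter_Dset_mul_subset u₁ u₂)
end
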